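/- arXiv:2209.01608 — 3 statements merged into one kernel-verified Lean document; each statement's English description precedes it below -/
import Mathlib

section
/- For any nonnegative real numbers y₁, …, y_T (with the convention that terms with zero denominator are zero), it holds that ∑_{r=1}^T y_r / √(∑_{s=1}^r y_s) ≤ 2 √(∑_{r=1}^T y_r). -/
lemma aux_div_sqrt (a b : ℝ) (ha : 0 ≤ a) (hb : 0 ≤ b) :
    a / Real.sqrt (b + a) ≤ 2 * Real.sqrt (b + a) - 2 * Real.sqrt b := by
  rcases eq_or_lt_of_le (by positivity : (0:ℝ) ≤ b + a) with h | h
  · have ha0 : a = 0 := by linarith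
    have hb0 : b = 0 := by linarith
    simp [ha0, hb0]
  · rw [div_le_iff₀ (Real.sqrt_pos.mpr h)]
    nlinarith [Real.sq_sqrt hb, Real.sq_sqrt h.le, Real.sqrt_nonneg b,
      Real.sqrt_nonneg (b + a), sq_nonneg (Real.sqrt (b + a) - Real.sqrt b)]

theorem sum_div_sqrt_partial_sum_le
    (T : ℕ) (y : ℕ → ℝ) (hy : ∀ r, 0 ≤ y r) :
    ∑ r ∈ Finset.Icc 1 T, y r / Real.sqrt (∑ s ∈ Finset.Icc 1 r, y s) ≤
      2 * Real.sqrt (∑ r ∈ Finset.Icc 1 T, y r) := by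
  induction T with
  | zero => simp
  | succ T ih =>
    rw [Finset.sum_Icc_succ_top (Nat.one_le_iff_ne_zero.mpr (Nat.succ_ne_zero T)),
        Finset.sum_Icc_succ_top (Nat.one_le_iff_ne_zero.mpr (Nat.succ_ne_zero T))]
    have hS : 0 ≤ ∑ s ∈ Finset.Icc 1 T, y s :=
      Finset.sum_nonneg fun i _ => hy i
    have := aux_div_sqrt (y (T + 1)) (∑ s ∈ Finset.Icc 1 T, y s) (hy _) hS
    linarith
end

section
/- Let 0 ≤ β < 1, m₀ = 0, v₀ = 0, m_t = β m_{t−1} + (1−β) g_t, v_t = v_{t−1} + g_t ⊙ g_t (elementwise square). Then ∑_{t=1}^T ∑_{i=1}^p m_{t,i}² / √(v_{t,i}) ≤ (2/(1−β)²) ∑_{i=1}^p ‖g_{1:T,i}‖, where g_{1:T,i} = (g_{1,i}, …, g_{T,i}) and terms with v_{t,i} = 0 are interpreted as zero. -/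
/-!
Fix a coordinate and write `a_t = m_t² / √v_t`, `b_t = g_t² / √v_t`. Convexity of the square gives
`m_{t+1}² ≤ β m_t² + (1 - β) g_{t+1}²`, and since `v` is nondecreasing this becomes the
averaging inequality `a_{t+1} ≤ β a_t + (1 - β) b_{t+1}`; summing it shows `∑ a_t ≤ ∑ b_t`.
Finally `g_t² / √v_t ≤ 2 (√v_t - √v_{t-1})` telescopes to `∑ b_t ≤ 2 √v_T`, and
`2 ≤ 2 / (1 - β)²`.
-/

open Finset Real

lemma sq_convex_comb_le {β : ℝ} (hβ0 : 0 ≤ β) (hβ1 : β ≤ 1) (x y : ℝ) :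
    (β * x + (1 - β) * y) ^ 2 ≤ β * x ^ 2 + (1 - β) * y ^ 2 := by
  nlinarith [mul_nonneg (mul_nonneg hβ0 (sub_nonneg.2 hβ1)) (sq_nonneg (x - y))]

lemma div_sqrt_add_le_two_mul_sub {x y : ℝ} (hx : 0 ≤ x) (hy : 0 ≤ y) :
    y / √(x + y) ≤ 2 * (√(x + y) - √x) := by
  rcases (add_nonneg hx hy).eq_or_lt with h0 | h0
  · obtain rfl : x = 0 := by linarith
    obtain rfl : y = 0 := by linarith
    simp
  · have hr := sqrt_le_sqrt (le_add_of_nonneg_right hy : x ≤ x + y)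
    rw [div_le_iff₀ (sqrt_pos.2 h0)]
    -- with `s = √(x + y)` and `r = √x` this is `s² - r² ≤ 2 s (s - r)`, i.e. `0 ≤ (s - r)²`
    nlinarith [sq_sqrt hx, sq_sqrt h0.le, sq_nonneg (√(x + y) - √x)]

lemma sum_div_sqrt_partial_sum_le_s4 (c : ℕ → ℝ) (hc : ∀ t, 0 ≤ c t) (T : ℕ) :
    ∑ t ∈ Icc 1 T, c t / √(∑ s ∈ Icc 1 t, c s) ≤ 2 * √(∑ t ∈ Icc 1 T, c t) := by
  induction T with
  | zero => simp
  | succ T ih =>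
    rw [sum_Icc_succ_top (by omega), sum_Icc_succ_top (by omega)]
    have := div_sqrt_add_le_two_mul_sub (sum_nonneg fun s (_ : s ∈ Icc 1 T) => hc s) (hc (T + 1))
    linarith

lemma sum_Icc_le_of_le_average {β : ℝ} (hβ0 : 0 ≤ β) (hβ1 : β < 1) {a b : ℕ → ℝ}
    (ha0 : a 0 = 0) (ha : ∀ t, 0 ≤ a t) (hab : ∀ t, a (t + 1) ≤ β * a t + (1 - β) * b (t + 1))
    (T : ℕ) : ∑ t ∈ Icc 1 T, a t ≤ ∑ t ∈ Icc 1 T, b t := by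
  have h_weighted : ∀ T, (1 - β) * ∑ t ∈ Icc 1 T, a t + β * a T ≤ (1 - β) * ∑ t ∈ Icc 1 T, b t := by
    intro T
    induction T with
    | zero => simp [ha0]
    | succ T ih =>
      rw [sum_Icc_succ_top (by omega), sum_Icc_succ_top (by omega)]
      linarith [hab T]
  have := h_weighted T
  nlinarith [mul_nonneg hβ0 (ha T)]

lemma sq_div_sqrt_le_of_sq_le {x u w : ℝ} (hxu : x ^ 2 ≤ u) (huw : u ≤ w) :
    x ^ 2 / √w ≤ x ^ 2 / √u := by
  rcases (le_trans (sq_nonneg x) hxu).eq_or_lt with hu | hu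
  · simp [show x = 0 by nlinarith]
  · exact div_le_div_of_nonneg_left (sq_nonneg x) (sqrt_pos.2 hu) (sqrt_le_sqrt huw)

lemma sum_ema_sq_div_sqrt_le {β : ℝ} (hβ0 : 0 ≤ β) (hβ1 : β < 1) {g m v : ℕ → ℝ}
    (hm0 : m 0 = 0) (hv0 : v 0 = 0) (hm : ∀ t, m (t + 1) = β * m t + (1 - β) * g (t + 1))
    (hv : ∀ t, v (t + 1) = v t + g (t + 1) ^ 2) (T : ℕ) :
    ∑ t ∈ Icc 1 T, m t ^ 2 / √(v t) ≤ 2 * √(∑ t ∈ Icc 1 T, g t ^ 2) := by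
  have hv_eq : ∀ t, v t = ∑ s ∈ Icc 1 t, g s ^ 2 := by
    intro t
    induction t with
    | zero => simp [hv0]
    | succ t ih => rw [hv, ih, sum_Icc_succ_top (by omega)]
  have hm_sq : ∀ t, m (t + 1) ^ 2 ≤ β * m t ^ 2 + (1 - β) * g (t + 1) ^ 2 := fun t =>
    hm t ▸ sq_convex_comb_le hβ0 hβ1.le _ _
  -- where `v t = 0` (so `m t ^ 2 / √(v t)` is the junk value `0`) this forces `m t = 0`
  have hmv : ∀ t, m t ^ 2 ≤ v t := by
    intro t
    induction t with
    | zero => simp [hm0, hv0]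
    | succ t ih => nlinarith [hm_sq t, hv t, sq_nonneg (m t), sq_nonneg (g (t + 1))]
  have hab : ∀ t, m (t + 1) ^ 2 / √(v (t + 1)) ≤
      β * (m t ^ 2 / √(v t)) + (1 - β) * (g (t + 1) ^ 2 / √(v (t + 1))) := by
    intro t
    have hv_le : v t ≤ v (t + 1) := by rw [hv t]; linarith [sq_nonneg (g (t + 1))]
    calc m (t + 1) ^ 2 / √(v (t + 1))
        ≤ β * (m t ^ 2 / √(v (t + 1))) + (1 - β) * (g (t + 1) ^ 2 / √(v (t + 1))) := by
          rw [mul_div_assoc', mul_div_assoc', ← add_div]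
          exact div_le_div_of_nonneg_right (hm_sq t) (sqrt_nonneg _)
      _ ≤ β * (m t ^ 2 / √(v t)) + (1 - β) * (g (t + 1) ^ 2 / √(v (t + 1))) := by
          have := sq_div_sqrt_le_of_sq_le (hmv t) hv_le
          gcongr
  calc ∑ t ∈ Icc 1 T, m t ^ 2 / √(v t)
      ≤ ∑ t ∈ Icc 1 T, g t ^ 2 / √(v t) :=
        sum_Icc_le_of_le_average hβ0 hβ1 (by simp [hm0]) (fun t => by positivity) hab T
    _ ≤ 2 * √(∑ t ∈ Icc 1 T, g t ^ 2) := by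
        simpa only [hv_eq] using
          sum_div_sqrt_partial_sum_le_s4 (fun t => g t ^ 2) (fun t => sq_nonneg _) T

theorem momentum_sum_sq_div_sqrt_le
    (p T : ℕ) (β : ℝ) (hβ0 : 0 ≤ β) (hβ1 : β < 1)
    (g m v : ℕ → Fin p → ℝ)
    (hm0 : m 0 = 0) (hv0 : v 0 = 0)
    (hm : ∀ t i, m (t + 1) i = β * m t i + (1 - β) * g (t + 1) i)
    (hv : ∀ t i, v (t + 1) i = v t i + g (t + 1) i ^ 2) :
    ∑ t ∈ Finset.Icc 1 T, ∑ i, m t i ^ 2 / Real.sqrt (v t i) ≤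
      (2 / (1 - β) ^ 2) * ∑ i, Real.sqrt (∑ t ∈ Finset.Icc 1 T, g t i ^ 2) := by
  have h_coord : ∀ i, ∑ t ∈ Icc 1 T, m t i ^ 2 / √(v t i) ≤ 2 * √(∑ t ∈ Icc 1 T, g t i ^ 2) :=
    fun i => sum_ema_sq_div_sqrt_le hβ0 hβ1 (congrFun hm0 i) (congrFun hv0 i)
      (fun t => hm t i) (fun t => hv t i) T
  have h_const : 2 ≤ 2 / (1 - β) ^ 2 := by
    rw [le_div_iff₀ (by nlinarith)]
    nlinarith
  calc ∑ t ∈ Icc 1 T, ∑ i, m t i ^ 2 / √(v t i)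
      ≤ 2 * ∑ i, √(∑ t ∈ Icc 1 T, g t i ^ 2) := by
        rw [sum_comm, mul_sum]
        exact sum_le_sum fun i _ => h_coord i
    _ ≤ (2 / (1 - β) ^ 2) * ∑ i, √(∑ t ∈ Icc 1 T, g t i ^ 2) := by
        gcongr
end

section
/- Let x_t, x*_t, x_{t+1}, x*_{t+1} ∈ X where X has ℓ∞-diameter at most D∞, and let v_{t,i} ≥ 0 be nondecreasing in t (v_{t,i} ≤ v_{t+1,i}). Then ∑_{t=1}^T ∑_{i=1}^p √(v_{t,i}) [ (x_{t+1,i} − x*_{t+1,i})² − (x_{t+1,i} − x*_{t,i})² ] ≤ 2 D∞ ∑_{i=1}^p √(v_{T,i}) ∑_{t=1}^T |x*_{t+1,i} − x*_{t,i}|. -/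
theorem comparator_shift_sum_bound
    (p T : ℕ) (X : Set (Fin p → ℝ)) (D : ℝ)
    (hdiam : ∀ a ∈ X, ∀ b ∈ X, ∀ i, |a i - b i| ≤ D)
    (x xs : ℕ → Fin p → ℝ)
    (hx : ∀ t, x t ∈ X) (hxs : ∀ t, xs t ∈ X)
    (v : ℕ → Fin p → ℝ)
    (hv0 : ∀ t i, 0 ≤ v t i) (hvmono : ∀ t i, v t i ≤ v (t + 1) i) :
    ∑ t ∈ Finset.Icc 1 T, ∑ i, Real.sqrt (v t i) *
        ((x (t + 1) i - xs (t + 1) i) ^ 2 - (x (t + 1) i - xs t i) ^ 2) ≤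
      2 * D * ∑ i, Real.sqrt (v T i) *
        ∑ t ∈ Finset.Icc 1 T, |xs (t + 1) i - xs t i| := by
  rcases Nat.eq_zero_or_pos p with hp | hp
  · subst hp
    simp
  have hD : 0 ≤ D := by
    have := hdiam (x 0) (hx 0) (x 0) (hx 0) ⟨0, hp⟩
    simpa using this
  have hvle : ∀ s t : ℕ, s ≤ t → ∀ i, v s i ≤ v t i := by
    intro s t hst i
    exact monotone_nat_of_le_succ (fun n => hvmono n i) hst
  calc ∑ t ∈ Finset.Icc 1 T, ∑ i, Real.sqrt (v t i) *
        ((x (t + 1) i - xs (t + 1) i) ^ 2 - (x (t + 1) i - xs t i) ^ 2)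
      ≤ ∑ t ∈ Finset.Icc 1 T, ∑ i,
          2 * D * (Real.sqrt (v T i) * |xs (t + 1) i - xs t i|) := by
        apply Finset.sum_le_sum
        intro t ht
        apply Finset.sum_le_sum
        intro i _
        have htT : t ≤ T := (Finset.mem_Icc.mp ht).2
        set a := x (t + 1) i
        set b := xs (t + 1) i
        set c := xs t i
        have h1 : |a - b| ≤ D := hdiam _ (hx _) _ (hxs _) i
        have h2 : |a - c| ≤ D := hdiam _ (hx _) _ (hxs _) i
        have key : (a - b) ^ 2 - (a - c) ^ 2 ≤ 2 * D * |b - c| := by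
          calc (a - b) ^ 2 - (a - c) ^ 2 = (c - b) * ((a - b) + (a - c)) := by ring
            _ ≤ |(c - b) * ((a - b) + (a - c))| := le_abs_self _
            _ = |b - c| * |(a - b) + (a - c)| := by
                rw [abs_mul, abs_sub_comm c b]
            _ ≤ |b - c| * (|a - b| + |a - c|) :=
                mul_le_mul_of_nonneg_left (abs_add_le _ _) (abs_nonneg _)
            _ ≤ |b - c| * (D + D) :=
                mul_le_mul_of_nonneg_left (add_le_add h1 h2) (abs_nonneg _)
            _ = 2 * D * |b - c| := by ring
        have hle : Real.sqrt (v t i) ≤ Real.sqrt (v T i) :=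
          Real.sqrt_le_sqrt (hvle t T htT i)
        have hst0 : 0 ≤ Real.sqrt (v t i) := Real.sqrt_nonneg _
        have hsT0 : 0 ≤ Real.sqrt (v T i) := Real.sqrt_nonneg _
        have habs : 0 ≤ |b - c| := abs_nonneg _
        nlinarith [mul_nonneg hD habs, mul_nonneg hst0 (sub_nonneg.mpr key),
          mul_nonneg (sub_nonneg.mpr hle) (mul_nonneg (mul_nonneg (by norm_num : (0:ℝ) ≤ 2) hD) habs)]
    _ = 2 * D * ∑ i, Real.sqrt (v T i) *
          ∑ t ∈ Finset.Icc 1 T, |xs (t + 1) i - xs t i| := by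
        rw [Finset.sum_comm, Finset.mul_sum]
        apply Finset.sum_congr rfl
        intro i _
        rw [Finset.mul_sum, Finset.mul_sum]
end
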